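/- Let L = L₀ ⊕ L₁ be a Leibniz superalgebra over ℂ with dim L₀ = n, dim L₁ = m, of super-nilindex (n,m). Then there exists a basis {X₁,…,Xₙ} of L₀ and {Y₁,…,Y_m} of L₁ (an adapted basis) such that [X_i,X₁] = X_{i+1} for 1 ≤ i ≤ n−1, [Xₙ,X₁] = 0, [Y_j,X₁] = Y_{j+1} for 1 ≤ j ≤ m−1, [Y_m,X₁] = 0, [Y_j,X_k] = 0 for all 1 ≤ j ≤ m and 2 ≤ k ≤ n, and all products [X_i,X_k] with 2 ≤ k ≤ n are zero. -/
import Mathlib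


/-- The sign `(-1)^(j·k)` for parities `j k : ZMod 2`, as a complex scalar. -/
def ssign (i j : ZMod 2) : ℂ := if i = 1 ∧ j = 1 then -1 else 1

/-- A (complex) Leibniz superalgebra structure on the vector space `V`: a ℤ₂-grading
`g` whose parts are complementary, together with an even bilinear product satisfying
the super Leibniz identity
`[x,[y,z]] = [[x,y],z] − (−1)^{|y||z|}[[x,z],y]` for homogeneous `y, z`. -/
structure LeibnizSuperAlg (V : Type*) [AddCommGroup V] [Module ℂ V] where
  g : ZMod 2 → Submodule ℂ V
  bk : V →ₗ[ℂ] V →ₗ[ℂ] V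
  compl : IsCompl (g 0) (g 1)
  grading : ∀ i j : ZMod 2, ∀ x ∈ g i, ∀ y ∈ g j, bk x y ∈ g (i + j)
  leibniz : ∀ j k : ZMod 2, ∀ x : V, ∀ y ∈ g j, ∀ z ∈ g k,
    bk x (bk y z) = bk (bk x y) z - ssign j k • bk (bk x z) y

namespace LeibnizSuperAlg

variable {V : Type*} [AddCommGroup V] [Module ℂ V]

/-- The descending sequences `C⁰(L_i) = L_i`, `C^{k+1}(L_i) = [C^k(L_i), L₀]`. -/
def C (A : LeibnizSuperAlg V) (i : ZMod 2) : ℕ → Submodule ℂ V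
  | 0 => A.g i
  | k + 1 => Submodule.span ℂ {z | ∃ x ∈ C A i k, ∃ y ∈ A.g 0, z = A.bk x y}

/-- The descending central sequence of the whole superalgebra. -/
def DC (A : LeibnizSuperAlg V) : ℕ → Submodule ℂ V
  | 0 => ⊤
  | k + 1 => Submodule.span ℂ {z | ∃ x ∈ DC A k, ∃ y : V, z = A.bk x y}

/-- Nilpotency: the descending central sequence reaches zero. -/
def IsNilpotent (A : LeibnizSuperAlg V) : Prop := ∃ k, A.DC k = ⊥

/-- `A` is nilpotent with `dim L₀ = n`, `dim L₁ = m` and super-nilindex `(n, m)`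
(the maximal possible value). -/
def HasMaxSNilindex (A : LeibnizSuperAlg V) (n m : ℕ) : Prop :=
  A.IsNilpotent ∧ Module.finrank ℂ (A.g 0) = n ∧ Module.finrank ℂ (A.g 1) = m ∧
    A.C 0 (n - 1) ≠ ⊥ ∧ A.C 1 (m - 1) ≠ ⊥ ∧ A.C 0 n = ⊥ ∧ A.C 1 m = ⊥

/-- Non-degeneracy: the product does not vanish identically on `L₁ × L₁`. -/
def NonDegenerate (A : LeibnizSuperAlg V) : Prop :=
  ∃ x ∈ A.g 1, ∃ y ∈ A.g 1, A.bk x y ≠ 0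

/-- `A` is naturally graded: there are subspaces `W a i` (`i ≥ 1`, parity `a`), splitting
the filtrations `C` (so that `W a i ≅ C^{i-1}(L_a)/C^i(L_a)` and `L ≅ gr(L)` in the
natural way) and compatible with the product (so `gr(L)` is a graded Leibniz
superalgebra, `[Lⁱ, Lʲ] ⊆ L^{i+j}`).  For finite-dimensional nilpotent superalgebras
this is equivalent to the textbook definition `L ≅ gr(L)` with `gr(L)` graded. -/
def NaturallyGraded (A : LeibnizSuperAlg V) : Prop :=
  ∃ W : ZMod 2 → ℕ → Submodule ℂ V,
    (∀ a, W a 0 = ⊥) ∧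
    (∀ a k, A.C a k = W a (k + 1) ⊔ A.C a (k + 1)) ∧
    (∀ a k, W a (k + 1) ⊓ A.C a (k + 1) = ⊥) ∧
    (∀ a b : ZMod 2, ∀ i j : ℕ, ∀ x ∈ W a i, ∀ y ∈ W b j, A.bk x y ∈ W (a + b) (i + j))

/-- `X 1, …, X n` and `Y 1, …, Y m` form an adapted basis of the superalgebra:
the `X i` are even, the `Y j` are odd, and together they form a basis of `V`. -/
def IsAdaptedBasis (A : LeibnizSuperAlg V) (n m : ℕ) (X Y : ℕ → V) : Prop :=
  (∀ i, 1 ≤ i → i ≤ n → X i ∈ A.g 0) ∧ (∀ j, 1 ≤ j → j ≤ m → Y j ∈ A.g 1) ∧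
  LinearIndependent ℂ
    (Sum.elim (fun i : Fin n => X (i.val + 1)) (fun j : Fin m => Y (j.val + 1))) ∧
  Submodule.span ℂ
    (Set.range (Sum.elim (fun i : Fin n => X (i.val + 1)) (fun j : Fin m => Y (j.val + 1)))) = ⊤

lemma ssign00 : ssign 0 0 = 1 := by
  rw [ssign, if_neg]; rintro ⟨h, -⟩; exact absurd h (by decide)

lemma bk_mem_C (A : LeibnizSuperAlg V) {a : ZMod 2} {k : ℕ} {x y : V}
    (hx : x ∈ A.C a k) (hy : y ∈ A.g 0) : A.bk x y ∈ A.C a (k + 1) :=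
  Submodule.subset_span ⟨x, hx, y, hy, rfl⟩

lemma C_succ_le (A : LeibnizSuperAlg V) (a : ZMod 2) : ∀ k, A.C a (k + 1) ≤ A.C a k := by
  intro k
  induction k with
  | zero =>
    rw [show A.C a 1 = Submodule.span ℂ {z | ∃ x ∈ A.C a 0, ∃ y ∈ A.g 0, z = A.bk x y} from rfl]
    apply Submodule.span_le.2
    rintro z ⟨x, hx, y, hy, rfl⟩
    have := A.grading a 0 x hx y hy
    rwa [add_zero] at this
  | succ k ih =>
    show Submodule.span ℂ _ ≤ Submodule.span ℂ _
    apply Submodule.span_mono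
    rintro z ⟨x, hx, y, hy, rfl⟩
    exact ⟨x, ih hx, y, hy, rfl⟩

lemma C_le (A : LeibnizSuperAlg V) (a : ZMod 2) {k l : ℕ} (h : k ≤ l) : A.C a l ≤ A.C a k := by
  induction l with
  | zero => simp_all
  | succ l ih =>
    rcases Nat.lt_or_ge k (l+1) with h' | h'
    · exact (A.C_succ_le a l).trans (ih (by omega))
    · have : k = l + 1 := by omega
      subst this; exact le_rfl

lemma mem_g_of_mem_C (A : LeibnizSuperAlg V) {a : ZMod 2} {k : ℕ} {x : V}
    (hx : x ∈ A.C a k) : x ∈ A.g a := A.C_le a (Nat.zero_le k) hx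

lemma bk_mem_C_of_C1 (A : LeibnizSuperAlg V) {a : ZMod 2} {k : ℕ} {x w : V}
    (hx : x ∈ A.C a k) (hw : w ∈ A.C 0 1) : A.bk x w ∈ A.C a (k + 2) := by
  have hle : A.C 0 1 ≤ (A.C a (k + 2)).comap (A.bk x) := by
    rw [show A.C 0 1 = Submodule.span ℂ {z | ∃ u ∈ A.C 0 0, ∃ v ∈ A.g 0, z = A.bk u v} from rfl]
    apply Submodule.span_le.2
    rintro z ⟨u, hu, v, hv, rfl⟩
    have hu' : u ∈ A.g 0 := hu
    simp only [Set.mem_preimage, SetLike.mem_coe, Submodule.mem_comap]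
    rw [A.leibniz 0 0 x u hu' v hv, LeibnizSuperAlg.ssign00, one_smul]
    exact sub_mem (A.bk_mem_C (A.bk_mem_C hx hu') hv) (A.bk_mem_C (A.bk_mem_C hx hv) hu')
  exact hle hw

lemma C_stab (A : LeibnizSuperAlg V) (a : ZMod 2) {k : ℕ} (h : A.C a (k + 1) = A.C a k) :
    ∀ j, k ≤ j → A.C a j = A.C a k := by
  intro j hj
  induction j with
  | zero => have : k = 0 := by omega
            subst this; rfl
  | succ j ih =>
    rcases Nat.lt_or_ge k (j+1) with h' | h'
    · have hj' : A.C a j = A.C a k := ih (by omega)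
      have : A.C a (j + 1) = A.C a (k + 1) := by
        show Submodule.span ℂ _ = Submodule.span ℂ _
        rw [hj']
      rw [this, h]
    · have : k = j + 1 := by omega
      subst this; rfl

section
variable (A : LeibnizSuperAlg V) (a : ZMod 2) (r : ℕ)

lemma C_lt (hbot : A.C a r = ⊥) (hne : A.C a (r - 1) ≠ ⊥) :
    ∀ k, k + 1 ≤ r → A.C a (k + 1) < A.C a k := by
  intro k hk
  refine lt_of_le_of_ne (A.C_succ_le a k) ?_
  intro heq
  have h1 := A.C_stab a heq (r - 1) (by omega)
  have h2 := A.C_stab a heq r (by omega)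
  exact hne (h1.trans (h2.symm.trans hbot))

variable [FiniteDimensional ℂ V]

lemma finrank_C (hr : Module.finrank ℂ (A.g a) = r) (hbot : A.C a r = ⊥)
    (hne : A.C a (r - 1) ≠ ⊥) : ∀ k, k ≤ r → Module.finrank ℂ (A.C a k) = r - k := by
  have hlt : ∀ k, k + 1 ≤ r →
      Module.finrank ℂ (A.C a (k + 1)) < Module.finrank ℂ (A.C a k) := fun k hk =>
    Submodule.finrank_lt_finrank_of_lt (A.C_lt a r hbot hne k hk)
  have hub : ∀ k, k ≤ r → Module.finrank ℂ (A.C a k) ≤ r - k := by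
    intro k
    induction k with
    | zero =>
      intro _
      have : Module.finrank ℂ (A.C a 0) = r := by rw [show A.C a 0 = A.g a from rfl, hr]
      omega
    | succ k ih =>
      intro hk
      have h1 := hlt k hk
      have h2 := ih (by omega)
      omega
  have hlb : ∀ d, d ≤ r → d ≤ Module.finrank ℂ (A.C a (r - d)) := by
    intro d
    induction d with
    | zero => intro _; omega
    | succ d ih =>
      intro hd
      have h1 : r - (d + 1) + 1 = r - d := by omega
      have h2 := hlt (r - (d + 1)) (by omega)
      rw [h1] at h2
      have := ih (by omega)
      omega
  intro k hk
  have h1 := hub k hk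
  have h2 := hlb (r - k) (by omega)
  rw [show r - (r - k) = k from by omega] at h2
  omega

lemma codim1 (hr : Module.finrank ℂ (A.g a) = r) (hbot : A.C a r = ⊥)
    (hne : A.C a (r - 1) ≠ ⊥) {k : ℕ} (hk : k + 1 ≤ r) {e : V}
    (he : e ∈ A.C a k) (hne' : e ∉ A.C a (k + 1)) :
    A.C a k = Submodule.span ℂ {e} ⊔ A.C a (k + 1) := by
  have h1 : Submodule.span ℂ {e} ⊔ A.C a (k + 1) ≤ A.C a k :=
    sup_le ((Submodule.span_singleton_le_iff_mem _ _).2 he) (A.C_succ_le a k)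
  refine (Submodule.eq_of_le_of_finrank_le h1 ?_).symm
  have hlt : A.C a (k + 1) < Submodule.span ℂ {e} ⊔ A.C a (k + 1) := by
    refine lt_of_le_of_ne le_sup_right (fun hcon => hne' ?_)
    rw [hcon]
    exact Submodule.mem_sup_left (Submodule.mem_span_singleton_self e)
  have h2 := Submodule.finrank_lt_finrank_of_lt hlt
  have h3 := A.finrank_C a r hr hbot hne k (by omega)
  have h4 := A.finrank_C a r hr hbot hne (k + 1) hk
  omega

end

lemma step (A : LeibnizSuperAlg V) {a0 : V} (ha0g : a0 ∈ A.g 0)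
    (hg0 : A.g 0 = Submodule.span ℂ {a0} ⊔ A.C 0 1) (a : ZMod 2) (k : ℕ) {e : V}
    (he : e ∈ A.C a k) (hCk : A.C a k = Submodule.span ℂ {e} ⊔ A.C a (k + 1)) :
    A.C a (k + 1) = Submodule.span ℂ {A.bk e a0} ⊔ A.C a (k + 2) := by
  apply le_antisymm
  · rw [show A.C a (k+1) = Submodule.span ℂ {z | ∃ x ∈ A.C a k, ∃ y ∈ A.g 0, z = A.bk x y}
      from rfl]
    apply Submodule.span_le.2
    rintro z ⟨x, hx, y, hy, rfl⟩
    rw [hCk] at hx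
    rw [hg0] at hy
    obtain ⟨u, hu, x', hx', rfl⟩ := Submodule.mem_sup.1 hx
    obtain ⟨c, rfl⟩ := Submodule.mem_span_singleton.1 hu
    obtain ⟨w, hw, y', hy', rfl⟩ := Submodule.mem_sup.1 hy
    obtain ⟨d, rfl⟩ := Submodule.mem_span_singleton.1 hw
    have expand : A.bk (c • e + x') (d • a0 + y')
        = c • (d • A.bk e a0) + (c • A.bk e y' + (d • A.bk x' a0 + A.bk x' y')) := by
      simp only [map_add, map_smul, LinearMap.add_apply, LinearMap.smul_apply, smul_add]
      module
    simp only [SetLike.mem_coe]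
    rw [expand]
    refine Submodule.add_mem _ ?_ (Submodule.add_mem _ ?_ (Submodule.add_mem _ ?_ ?_))
    · exact Submodule.mem_sup_left (Submodule.smul_mem _ _ (Submodule.smul_mem _ _
        (Submodule.mem_span_singleton_self _)))
    · exact Submodule.mem_sup_right (Submodule.smul_mem _ _ (A.bk_mem_C_of_C1 he hy'))
    · exact Submodule.mem_sup_right (Submodule.smul_mem _ _ (A.bk_mem_C hx' ha0g))
    · exact Submodule.mem_sup_right (A.bk_mem_C hx' (A.C_succ_le 0 0 hy'))
  · exact sup_le ((Submodule.span_singleton_le_iff_mem _ _).2 (A.bk_mem_C he ha0g))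
      (A.C_succ_le a (k + 1))

lemma chain (A : LeibnizSuperAlg V) {a0 : V} (ha0g : a0 ∈ A.g 0)
    (hg0 : A.g 0 = Submodule.span ℂ {a0} ⊔ A.C 0 1) (a : ZMod 2) {e0 : V}
    (he0 : e0 ∈ A.C a 0) (hC0 : A.C a 0 = Submodule.span ℂ {e0} ⊔ A.C a 1) :
    ∀ k, (fun v => A.bk v a0)^[k] e0 ∈ A.C a k ∧
      A.C a k = Submodule.span ℂ {(fun v => A.bk v a0)^[k] e0} ⊔ A.C a (k + 1) := by
  intro k
  induction k with
  | zero => exact ⟨he0, hC0⟩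
  | succ k ih =>
    rw [Function.iterate_succ_apply']
    exact ⟨A.bk_mem_C ih.1 ha0g, A.step ha0g hg0 a k ih.1 ih.2⟩

lemma span_chain (A : LeibnizSuperAlg V) (a : ZMod 2) (r : ℕ) (E : ℕ → V)
    (hbot : A.C a r = ⊥)
    (hchain : ∀ k, A.C a k = Submodule.span ℂ {E k} ⊔ A.C a (k + 1)) :
    A.g a ≤ Submodule.span ℂ (Set.range fun i : Fin r => E i.val) := by
  have key : ∀ d, d ≤ r → A.C a (r - d) ≤ Submodule.span ℂ (Set.range fun i : Fin r => E i.val) := by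
    intro d
    induction d with
    | zero => intro _; rw [Nat.sub_zero, hbot]; exact bot_le
    | succ d ih =>
      intro hd
      rw [hchain (r - (d + 1))]
      apply sup_le
      · rw [Submodule.span_singleton_le_iff_mem]
        exact Submodule.subset_span ⟨⟨r - (d + 1), by omega⟩, rfl⟩
      · rw [show r - (d + 1) + 1 = r - d from by omega]
        exact ih (by omega)
  have := key r le_rfl
  rwa [Nat.sub_self, show A.C a 0 = A.g a from rfl] at this


end LeibnizSuperAlg

/-- Adapted-basis theorem: every Leibniz superalgebra with `dim L₀ = n`,
`dim L₁ = m` and maximal super-nilindex `(n, m)` admits an adapted basis. -/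
theorem stmt10 {V : Type*} [AddCommGroup V] [Module ℂ V] [FiniteDimensional ℂ V] (A : LeibnizSuperAlg V) (n m : ℕ)
    (h : A.HasMaxSNilindex n m) :
    ∃ X Y : ℕ → V, A.IsAdaptedBasis n m X Y ∧
      (∀ i, 1 ≤ i → i ≤ n - 1 → A.bk (X i) (X 1) = X (i + 1)) ∧
      A.bk (X n) (X 1) = 0 ∧
      (∀ j, 1 ≤ j → j ≤ m - 1 → A.bk (Y j) (X 1) = Y (j + 1)) ∧
      A.bk (Y m) (X 1) = 0 ∧
      (∀ j k, 1 ≤ j → j ≤ m → 2 ≤ k → k ≤ n → A.bk (Y j) (X k) = 0) ∧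
      (∀ i k, 1 ≤ i → i ≤ n → 2 ≤ k → k ≤ n → A.bk (X i) (X k) = 0) := by
  obtain ⟨-, hn0, hm0, hne0, hne1, hbot0, hbot1⟩ := h
  have hn : 1 ≤ n := by
    rcases n with _ | n
    · exact absurd hbot0 hne0
    · omega
  have hm : 1 ≤ m := by
    rcases m with _ | m
    · exact absurd hbot1 hne1
    · omega
  obtain ⟨a0, ha0, ha0n⟩ := SetLike.exists_of_lt (A.C_lt 0 n hbot0 hne0 0 hn)
  have ha0g : a0 ∈ A.g 0 := ha0
  have hg0 : A.g 0 = Submodule.span ℂ {a0} ⊔ A.C 0 1 :=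
    A.codim1 0 n hn0 hbot0 hne0 hn ha0 ha0n
  obtain ⟨y0, hy0, hy0n⟩ := SetLike.exists_of_lt (A.C_lt 1 m hbot1 hne1 0 hm)
  have hC10 : A.C 1 0 = Submodule.span ℂ {y0} ⊔ A.C 1 1 :=
    A.codim1 1 m hm0 hbot1 hne1 hm hy0 hy0n
  have chain0 := A.chain ha0g hg0 0 (e0 := a0) ha0 hg0
  have chain1 := A.chain ha0g hg0 1 (e0 := y0) hy0 hC10
  have hspan0 : A.g 0 ≤ Submodule.span ℂ
      (Set.range fun i : Fin n => (fun v => A.bk v a0)^[(i : ℕ)] a0) :=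
    A.span_chain 0 n (fun k => (fun v => A.bk v a0)^[k] a0) hbot0 (fun k => (chain0 k).2)
  have hspan1 : A.g 1 ≤ Submodule.span ℂ
      (Set.range fun j : Fin m => (fun v => A.bk v a0)^[(j : ℕ)] y0) :=
    A.span_chain 1 m (fun k => (fun v => A.bk v a0)^[k] y0) hbot1 (fun k => (chain1 k).2)
  have htop : ⊤ ≤ Submodule.span ℂ (Set.range (Sum.elim
      (fun i : Fin n => (fun v => A.bk v a0)^[(i : ℕ) + 1 - 1] a0)
      (fun j : Fin m => (fun v => A.bk v a0)^[(j : ℕ) + 1 - 1] y0))) := by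
    rw [Set.Sum.elim_range, Submodule.span_union, ← A.compl.sup_eq_top]
    exact sup_le_sup hspan0 hspan1
  have hrank : Module.finrank ℂ V = n + m := by
    have h1 := Submodule.finrank_sup_add_finrank_inf_eq (A.g 0) (A.g 1)
    rw [A.compl.sup_eq_top, A.compl.inf_eq_bot, finrank_top, finrank_bot, hn0, hm0] at h1
    omega
  have hcard : Fintype.card (Fin n ⊕ Fin m) = Module.finrank ℂ V := by
    simp [hrank]
  have key : ∀ k, 2 ≤ k → ∀ x : V, A.bk x ((fun v => A.bk v a0)^[k - 1] a0) = 0 := by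
    intro k hk
    induction k, hk using Nat.le_induction with
    | base =>
      intro x
      have hL := A.leibniz 0 0 x a0 ha0g a0 ha0g
      show A.bk x ((fun v => A.bk v a0)^[1] a0) = 0
      rw [show (fun v => A.bk v a0)^[1] a0 = A.bk a0 a0 from rfl, hL, LeibnizSuperAlg.ssign00, one_smul,
        sub_self]
    | succ k hk2 ih =>
      intro x
      have hXk : (fun v => A.bk v a0)^[k - 1] a0 ∈ A.g 0 :=
        A.mem_g_of_mem_C (chain0 (k - 1)).1
      have h2 : (fun v => A.bk v a0)^[k + 1 - 1] a0
          = A.bk ((fun v => A.bk v a0)^[k - 1] a0) a0 := by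
        rw [show k + 1 - 1 = (k - 1) + 1 from by omega, Function.iterate_succ_apply']
      rw [h2, A.leibniz 0 0 x ((fun v => A.bk v a0)^[k - 1] a0) hXk a0 ha0g, LeibnizSuperAlg.ssign00,
        one_smul, ih x, ih (A.bk x a0)]
      simp
  refine ⟨fun i => (fun v => A.bk v a0)^[i - 1] a0, fun j => (fun v => A.bk v a0)^[j - 1] y0,
    ⟨?_, ?_, ?_, ?_⟩, ?_, ?_, ?_, ?_, ?_, ?_⟩
  · intro i h1 h2
    exact A.mem_g_of_mem_C (chain0 (i - 1)).1
  · intro j h1 h2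
    exact A.mem_g_of_mem_C (chain1 (j - 1)).1
  · exact linearIndependent_of_top_le_span_of_card_eq_finrank htop hcard
  · exact top_le_iff.1 htop
  · intro i h1 h2
    show A.bk ((fun v => A.bk v a0)^[i - 1] a0) ((fun v => A.bk v a0)^[1 - 1] a0)
      = (fun v => A.bk v a0)^[i + 1 - 1] a0
    rw [show i + 1 - 1 = (i - 1) + 1 from by omega, Function.iterate_succ_apply']
    rfl
  · have hCbot : A.C 0 (n - 1 + 1) = ⊥ := by
      rw [show n - 1 + 1 = n from by omega]; exact hbot0
    have h2 : (fun v => A.bk v a0)^[n - 1 + 1] a0 = 0 := by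
      have hmem := (chain0 (n - 1 + 1)).1
      rw [hCbot, Submodule.mem_bot] at hmem
      exact hmem
    rw [Function.iterate_succ_apply'] at h2
    exact h2
  · intro j h1 h2
    show A.bk ((fun v => A.bk v a0)^[j - 1] y0) ((fun v => A.bk v a0)^[1 - 1] a0)
      = (fun v => A.bk v a0)^[j + 1 - 1] y0
    rw [show j + 1 - 1 = (j - 1) + 1 from by omega, Function.iterate_succ_apply']
    rfl
  · have hCbot : A.C 1 (m - 1 + 1) = ⊥ := by
      rw [show m - 1 + 1 = m from by omega]; exact hbot1
    have h2 : (fun v => A.bk v a0)^[m - 1 + 1] y0 = 0 := by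
      have hmem := (chain1 (m - 1 + 1)).1
      rw [hCbot, Submodule.mem_bot] at hmem
      exact hmem
    rw [Function.iterate_succ_apply'] at h2
    exact h2
  · intro j k hj1 hj2 hk2 hkn
    exact key k hk2 _
  · intro i k hi1 hi2 hk2 hkn
    exact key k hk2 _
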